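/- Let η, ψ be Schwartz functions on ℝⁿ and let k be a nonnegative integer such that ∫_{ℝⁿ} ψ(x) x^I dx = 0 for every multi-index I with |I| ≤ k. Then for every M ≥ 0 there is a constant C = C(η, ψ, k, M, n) such that for all 0 < t ≤ 1 and all x ∈ ℝⁿ, |(η * ψ_t)(x)| ≤ C t^{k+1} (1 + |x|)^{-M}. -/

import Mathlib

open MeasureTheory Metric SchwartzMap
open scoped ENNReal

noncomputable section

abbrev Eu (n : ℕ) := EuclideanSpace ℝ (Fin n)

/-- Dilation: `φ_t(x) = t^{-n} φ(x/t)`. -/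
def dil (n : ℕ) (φ : Eu n → ℂ) (t : ℝ) : Eu n → ℂ :=
  fun x => ((t ^ n : ℝ) : ℂ)⁻¹ * φ (t⁻¹ • x)

/-- Convolution on `ℝⁿ`. -/
def cnv (n : ℕ) (f g : Eu n → ℂ) : Eu n → ℂ :=
  fun x => ∫ y, f (x - y) * g y

/-- Peetre maximal function `F**_{N,R}`. -/
def peetre (n : ℕ) (F : Eu n → ℂ) (N R : ℝ) : Eu n → ℝ≥0∞ :=
  fun x => ⨆ y : Eu n, (‖F (x - y)‖₊ : ℝ≥0∞) / ENNReal.ofReal ((1 + R * ‖y‖) ^ N)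

/-- Hardy–Littlewood maximal operator of a (nonnegative) function. -/
def HL (n : ℕ) (g : Eu n → ℝ) : Eu n → ℝ≥0∞ :=
  fun x => ⨆ (z : Eu n) (ρ : ℝ) (_ : x ∈ ball z ρ),
    (volume (ball z ρ))⁻¹ * ∫⁻ y in ball z ρ, ENNReal.ofReal (g y)

/-- The quantity `C(η, ψ, t, L) = ∫ (1+|x|)^L |(η * ψ_t)(x)| dx`. -/
def Cq (n : ℕ) (η ψ : Eu n → ℂ) (t L : ℝ) : ℝ≥0∞ :=
  ∫⁻ x, ENNReal.ofReal ((1 + ‖x‖) ^ L) * (‖cnv n η (dil n ψ t) x‖₊ : ℝ≥0∞)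

/-- Partial derivative in the `k`-th coordinate direction. -/
def pd (n : ℕ) (k : Fin n) (g : Eu n → ℂ) : Eu n → ℂ :=
  fun x => fderiv ℝ g x (EuclideanSpace.single k 1)

/-- All moments `∫ g(x) x^I dx` with `|I| ≤ k` vanish. -/
def momZero (n k : ℕ) (g : Eu n → ℂ) : Prop :=
  ∀ I : Fin n → ℕ, (∑ i, I i) ≤ k → ∫ x, g x * ∏ i, ((x i : ℂ) ^ I i) = 0

/-- Continuous Calderón reproducing formula:
`Σ_ℓ ∫_ε^B (f * φ^{(ℓ)}_t * η^{(ℓ)}_t)(x) dt/t → f(x)` as `ε → 0+`, `B → ∞`. -/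
def Calderon (n M : ℕ) (φ η : Fin M → 𝓢(Eu n, ℂ)) : Prop :=
  ∀ (f : 𝓢(Eu n, ℂ)) (x : Eu n),
    Filter.Tendsto
      (fun p : ℝ × ℝ => ∑ ℓ : Fin M, ∫ t in Set.Ioc p.1 p.2,
        cnv n (cnv n ⇑f (dil n ⇑(φ ℓ) t)) (dil n ⇑(η ℓ) t) x / (t : ℂ))
      ((nhdsWithin 0 (Set.Ioi 0)) ×ˢ Filter.atTop) (nhds (f x))

/-- Discrete Calderón reproducing formula with parameter `b`:
`Σ_{j=-k}^m Σ_ℓ (f * φ^{(ℓ)}_{bʲ} * η^{(ℓ)}_{bʲ})(x) → f(x)` as `k, m → ∞`. -/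
def CalderonDisc (n M : ℕ) (b : ℝ) (φ η : Fin M → 𝓢(Eu n, ℂ)) : Prop :=
  ∀ (f : 𝓢(Eu n, ℂ)) (x : Eu n),
    Filter.Tendsto
      (fun p : ℕ × ℕ => ∑ j ∈ Finset.Icc (-(p.1 : ℤ)) (p.2 : ℤ), ∑ ℓ : Fin M,
        cnv n (cnv n ⇑f (dil n ⇑(φ ℓ) (b ^ j))) (dil n ⇑(η ℓ) (b ^ j)) x)
      Filter.atTop (nhds (f x))

/-- Muckenhoupt `A_s` condition for a weight `w`. -/
def MuckA (n : ℕ) (s : ℝ) (w : Eu n → ℝ) : Prop :=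
  ∃ A : ℝ, ∀ (z : Eu n) (ρ : ℝ), 0 < ρ →
    ((volume (ball z ρ)).toReal⁻¹ * ∫ y in ball z ρ, w y) *
      ((volume (ball z ρ)).toReal⁻¹ * ∫ y in ball z ρ, (w y) ^ (-(1 / (s - 1)))) ^ (s - 1) ≤ A

/-- Iterated coordinate partial derivatives along a list of directions. -/
def multiDeriv (n : ℕ) : List (Fin n) → (Eu n → ℂ) → Eu n → ℂ
  | [], g => g
  | i :: Is, g => fun x => fderiv ℝ (multiDeriv n Is g) x (EuclideanSpace.single i 1)


section aux
variable {E F : Type*} [NormedAddCommGroup E] [NormedSpace ℝ E]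
  [NormedAddCommGroup F] [NormedSpace ℝ F]

lemma itfd_comp_add (f : E → F) (hf : ContDiff ℝ (⊤:ℕ∞) f) (c : E) (n : ℕ) :
    (fun x => iteratedFDeriv ℝ n (fun z => f (z + c)) x)
      = fun x => iteratedFDeriv ℝ n f (x + c) := by
  induction n with
  | zero => ext x m; simp
  | succ n IH =>
    ext x m
    rw [iteratedFDeriv_succ_apply_left, iteratedFDeriv_succ_apply_left]
    congr 1
    have hdiff : DifferentiableAt ℝ (iteratedFDeriv ℝ n f) (x + c) :=
      (hf.differentiable_iteratedFDeriv (by exact_mod_cast lt_top_iff_ne_top.2 (by simp))).differentiableAt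
    have h1 : HasFDerivAt (fun z => iteratedFDeriv ℝ n f (z + c))
        (fderiv ℝ (iteratedFDeriv ℝ n f) (x + c)) x := by
      have := hdiff.hasFDerivAt.comp x ((hasFDerivAt_id x).add_const c)
      exact this
    have IH' : iteratedFDeriv ℝ n (fun z => f (z + c)) = fun x => iteratedFDeriv ℝ n f (x + c) := IH
    rw [IH', h1.fderiv]

lemma idW_eq_id {g : ℝ → F} (hg : ContDiff ℝ (⊤:ℕ∞) g) {s : Set ℝ} (hs : UniqueDiffOn ℝ s)
    {r : ℝ} (hr : r ∈ s) (j : ℕ) :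
    iteratedDerivWithin j g s r = iteratedDeriv j g r := by
  rw [iteratedDerivWithin_eq_iteratedFDerivWithin, iteratedDeriv_eq_iteratedFDeriv]
  congr 1
  have h : HasFTaylorSeriesUpToOn (⊤ : ℕ∞) g (ftaylorSeries ℝ g) s :=
    (contDiff_iff_ftaylorSeries.mp hg).hasFTaylorSeriesUpToOn s
  exact (h.eq_iteratedFDerivWithin_of_uniqueDiffOn (by exact_mod_cast le_top) hs hr).symm

lemma lineDeriv_eq (η : E → F) (hη : ContDiff ℝ (⊤:ℕ∞) η) (x w : E) (j : ℕ) (s : ℝ) :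
    iteratedDeriv j (fun s : ℝ => η (x + s • w)) s
      = iteratedFDeriv ℝ j η (x + s • w) (fun _ => w) := by
  set L : ℝ →L[ℝ] E := ContinuousLinearMap.smulRight (ContinuousLinearMap.id ℝ ℝ) w with hL
  have hL1 : ∀ r : ℝ, L r = r • w := fun r => rfl
  have hfun : (fun s : ℝ => η (x + s • w)) = (fun z => η (z + x)) ∘ L := by
    ext r; simp [hL1, add_comm]
  have htr : ContDiff ℝ (⊤:ℕ∞) (fun z : E => η (z + x)) :=
    hη.comp (contDiff_id.add contDiff_const)
  rw [iteratedDeriv_eq_iteratedFDeriv, hfun,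
    L.iteratedFDeriv_comp_right htr s (by exact_mod_cast le_top)]
  rw [ContinuousMultilinearMap.compContinuousLinearMap_apply]
  have h2 : iteratedFDeriv ℝ j (fun z => η (z + x)) (L s)
      = iteratedFDeriv ℝ j η (L s + x) := congrFun (itfd_comp_add η hη x j) (L s)
  rw [h2]
  simp [hL1, add_comm]

lemma taylor_bound (η : E → F) (hη : ContDiff ℝ (⊤:ℕ∞) η) (x w : E) (k : ℕ) (c : ℝ)
    (hc : ∀ s ∈ Set.Icc (0:ℝ) 1, ‖iteratedFDeriv ℝ (k+1) η (x + s • w)‖ ≤ c) :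
    ‖η (x + w) - ∑ j ∈ Finset.range (k+1),
        ((j.factorial : ℝ)⁻¹) • (iteratedFDeriv ℝ j η x (fun _ => w))‖
      ≤ c * ‖w‖^(k+1) / k.factorial := by
  set g : ℝ → F := fun s => η (x + s • w) with hg
  have hgsm : ContDiff ℝ (⊤:ℕ∞) g :=
    hη.comp (contDiff_const.add (contDiff_id.smul contDiff_const))
  have h01 : UniqueDiffOn ℝ (Set.Icc (0:ℝ) 1) := uniqueDiffOn_Icc one_pos
  have hmem : (1:ℝ) ∈ Set.Icc (0:ℝ) 1 := by norm_num
  have hbd : ∀ s ∈ Set.Icc (0:ℝ) 1,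
      ‖iteratedDerivWithin (k+1) g (Set.Icc 0 1) s‖ ≤ c * ‖w‖^(k+1) := by
    intro s hs
    rw [idW_eq_id hgsm h01 hs, lineDeriv_eq η hη x w (k+1) s]
    calc ‖iteratedFDeriv ℝ (k+1) η (x + s • w) (fun _ => w)‖
        ≤ ‖iteratedFDeriv ℝ (k+1) η (x + s • w)‖ * ∏ _i : Fin (k+1), ‖w‖ :=
          ContinuousMultilinearMap.le_opNorm _ _
      _ ≤ c * ‖w‖^(k+1) := by
          rw [Finset.prod_const, Finset.card_univ, Fintype.card_fin]
          exact mul_le_mul_of_nonneg_right (hc s hs) (by positivity)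
  have := taylor_mean_remainder_bound (f := g) (a := (0:ℝ)) (b := 1) (n := k)
    zero_le_one (hgsm.of_le (by exact_mod_cast le_top)).contDiffOn hmem hbd
  have heq : taylorWithinEval g k (Set.Icc (0:ℝ) 1) 0 1
      = ∑ j ∈ Finset.range (k+1),
          ((j.factorial : ℝ)⁻¹) • (iteratedFDeriv ℝ j η x (fun _ => w)) := by
    rw [taylor_within_apply]
    refine Finset.sum_congr rfl fun j hj => ?_
    rw [idW_eq_id hgsm h01 (by norm_num) j, lineDeriv_eq η hη x w j 0]
    norm_num
  rw [heq] at this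
  have : ‖g 1 - ∑ j ∈ Finset.range (k+1),
      ((j.factorial : ℝ)⁻¹) • (iteratedFDeriv ℝ j η x (fun _ => w))‖
      ≤ c * ‖w‖^(k+1) * (1 - 0)^(k+1) / k.factorial := this
  simpa [hg] using this

end aux

section lem
variable {n : ℕ}

lemma coord_le_norm (y : Eu n) (i : Fin n) : |y i| ≤ ‖y‖ := by
  rw [EuclideanSpace.norm_eq]
  rw [show |y i| = Real.sqrt ((y i)^2) from (Real.sqrt_sq_eq_abs _).symm]
  apply Real.sqrt_le_sqrt
  have := Finset.single_le_sum (f := fun j => ‖y j‖^2) (fun j _ => by positivity)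
    (Finset.mem_univ i)
  simpa [Real.norm_eq_abs, sq_abs] using this

lemma one_add_pow_bound (a : ℝ) (ha : 0 ≤ a) (p : ℕ) :
    (1 + a)^p ≤ 2^p * (1 + a^p) := by
  rcases le_total a 1 with h | h
  · calc (1+a)^p ≤ 2^p := by
          apply pow_le_pow_left₀ (by positivity) (by linarith)
      _ ≤ 2^p * (1 + a^p) := by nlinarith [pow_nonneg ha p, pow_pos (zero_lt_two (α := ℝ)) p]
  · calc (1+a)^p ≤ (2*a)^p := by
          apply pow_le_pow_left₀ (by positivity) (by linarith)
      _ = 2^p * a^p := mul_pow 2 a p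
      _ ≤ 2^p * (1 + a^p) := by nlinarith [pow_pos (zero_lt_two (α := ℝ)) p]

lemma int_one_add (ψ : 𝓢(Eu n, ℂ)) (p : ℕ) :
    Integrable (fun y : Eu n => (1+‖y‖)^p * ‖ψ y‖) := by
  have hcont : Continuous (fun y : Eu n => (1+‖y‖)^p * ‖ψ y‖) := by
    exact ((continuous_const.add continuous_norm).pow p).mul ψ.continuous.norm
  refine Integrable.mono' (g := fun y => 2^p * (1 * ‖ψ y‖) + 2^p * (‖y‖^p * ‖ψ y‖))
    (((ψ.integrable_pow_mul volume 0).const_mul _).add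
      ((ψ.integrable_pow_mul volume p).const_mul _)) hcont.aestronglyMeasurable ?_
  · filter_upwards with y
    have h1 : (1+‖y‖)^p ≤ 2^p * (1 + ‖y‖^p) := one_add_pow_bound ‖y‖ (norm_nonneg y) p
    have h0 : 0 ≤ ‖ψ y‖ := norm_nonneg _
    rw [Real.norm_eq_abs, abs_of_nonneg (by positivity)]
    calc (1+‖y‖)^p * ‖ψ y‖ ≤ (2^p * (1 + ‖y‖^p)) * ‖ψ y‖ := by
          exact mul_le_mul_of_nonneg_right h1 h0
      _ = 2^p * (1 * ‖ψ y‖) + 2^p * (‖y‖^p * ‖ψ y‖) := by ring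

lemma int_mono (ψ : 𝓢(Eu n, ℂ)) (I : Fin n → ℕ) :
    Integrable (fun y : Eu n => ψ y * ∏ i, ((y i : ℂ)) ^ I i) := by
  have hcont : Continuous (fun y : Eu n => ψ y * ∏ i, ((y i : ℂ)) ^ I i) := by
    refine ψ.continuous.mul (continuous_finset_prod _ fun i _ => ?_)
    exact (Complex.continuous_ofReal.comp (EuclideanSpace.proj (𝕜 := ℝ) i).continuous).pow _
  refine Integrable.mono' (g := fun y => (1+‖y‖)^(∑ i, I i) * ‖ψ y‖)
    (int_one_add ψ _) hcont.aestronglyMeasurable ?_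
  filter_upwards with y
  rw [norm_mul]
  rw [mul_comm ((1+‖y‖)^(∑ i, I i))]
  apply mul_le_mul_of_nonneg_left _ (norm_nonneg _)
  calc ‖∏ i, ((y i : ℂ)) ^ I i‖ = ∏ i, |y i| ^ I i := by
        rw [norm_prod]
        exact Finset.prod_congr rfl fun i _ => by
          rw [norm_pow, Complex.norm_real, Real.norm_eq_abs]
    _ ≤ ∏ i, (1+‖y‖) ^ I i := by
        apply Finset.prod_le_prod (fun i _ => by positivity) fun i _ => ?_
        exact pow_le_pow_left₀ (abs_nonneg _) ((coord_le_norm y i).trans (by linarith)) _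
    _ = (1+‖y‖) ^ (∑ i, I i) := by rw [Finset.prod_pow_eq_pow_sum]

lemma expand_multi (η : Eu n → ℂ) (x : Eu n) (t : ℝ) (j : ℕ) (y : Eu n) :
    iteratedFDeriv ℝ j η x (fun _ => -(t • y))
      = ∑ r : Fin j → Fin n, (∏ m, ((-t) * y (r m))) •
          iteratedFDeriv ℝ j η x (fun m => EuclideanSpace.single (r m) (1:ℝ)) := by
  have hy : (fun _ : Fin j => -(t • y))
      = fun _ : Fin j => ∑ i : Fin n, ((-t) * y i) • EuclideanSpace.single i (1:ℝ) := by
    funext m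
    have hy' : ∑ i : Fin n, y i • EuclideanSpace.single i (1:ℝ) = y := by
      have := (EuclideanSpace.basisFun (Fin n) ℝ).sum_repr y
      simpa [EuclideanSpace.basisFun_apply, EuclideanSpace.basisFun_repr] using this
    calc -(t • y) = (-t) • y := by rw [neg_smul]
      _ = (-t) • ∑ i : Fin n, y i • EuclideanSpace.single i (1:ℝ) := by rw [hy']
      _ = ∑ i : Fin n, ((-t) * y i) • EuclideanSpace.single i (1:ℝ) := by
          rw [Finset.smul_sum]
          exact Finset.sum_congr rfl fun i _ => by rw [smul_smul]
  rw [hy, (iteratedFDeriv ℝ j η x).map_sum]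
  exact Finset.sum_congr rfl fun r _ =>
    ((iteratedFDeriv ℝ j η x).map_smul_univ _ _)

lemma mono_prod (y : Eu n) {j : ℕ} (r : Fin j → Fin n) :
    ∏ m, y (r m) = ∏ i : Fin n, (y i) ^ (Finset.univ.filter (fun m => r m = i)).card := by
  classical
  rw [Finset.prod_comp (fun i => y i) r]
  refine Finset.prod_subset (Finset.subset_univ _) fun b _ hb => ?_
  have hemp : Finset.univ.filter (fun m => r m = b) = (∅ : Finset (Fin j)) := by
    ext m
    simp only [Finset.mem_filter, Finset.mem_univ, true_and, Finset.notMem_empty, iff_false]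
    intro h
    exact hb (Finset.mem_image.mpr ⟨m, Finset.mem_univ m, h⟩)
  simp [hemp]

open Classical in
lemma expand_T (η : Eu n → ℂ) (ψ : 𝓢(Eu n, ℂ)) (k : ℕ) (x : Eu n) (t : ℝ) (y : Eu n) :
      (∑ j ∈ Finset.range (k+1), ((j.factorial:ℝ)⁻¹) •
        (iteratedFDeriv ℝ j η x (fun _ => -(t • y)))) * ψ y
      = ∑ j ∈ Finset.range (k+1), ∑ r : Fin j → Fin n,
          ((j.factorial:ℝ)⁻¹ * (-t)^j) •
            ((iteratedFDeriv ℝ j η x (fun m => EuclideanSpace.single (r m) (1:ℝ))) *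
              (ψ y * ∏ i, ((y i:ℂ)) ^ (Finset.univ.filter (fun m => r m = i)).card)) := by
    rw [Finset.sum_mul]
    refine Finset.sum_congr rfl fun j hj => ?_
    rw [expand_multi η x t j y, Finset.smul_sum, Finset.sum_mul]
    refine Finset.sum_congr rfl fun r _ => ?_
    have hprod : (∏ m, ((-t) * y (r m)))
        = (-t)^j * ∏ i : Fin n, (y i) ^ (Finset.univ.filter (fun m => r m = i)).card := by
      rw [Finset.prod_mul_distrib, Finset.prod_const, Finset.card_univ, Fintype.card_fin,
        mono_prod]
    rw [hprod]
    simp only [Complex.real_smul, smul_mul_assoc]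
    push_cast
    ring

open Classical in
lemma int_T (η : Eu n → ℂ) (ψ : 𝓢(Eu n, ℂ)) (k : ℕ) (x : Eu n) (t : ℝ) :
    Integrable (fun y : Eu n => (∑ j ∈ Finset.range (k+1), ((j.factorial:ℝ)⁻¹) •
        (iteratedFDeriv ℝ j η x (fun _ => -(t • y)))) * ψ y) := by
  simp_rw [expand_T η ψ k x t]
  apply integrable_finset_sum
  intro j _
  apply integrable_finset_sum
  intro r _
  exact (((int_mono ψ _).const_mul _).fun_smul _)

open Classical in
lemma integral_T_zero (η : Eu n → ℂ) (ψ : 𝓢(Eu n, ℂ)) (k : ℕ)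
    (hψ : momZero n k ⇑ψ) (x : Eu n) (t : ℝ) :
    ∫ y : Eu n, (∑ j ∈ Finset.range (k+1), ((j.factorial:ℝ)⁻¹) •
        (iteratedFDeriv ℝ j η x (fun _ => -(t • y)))) * ψ y = 0 := by
  simp_rw [expand_T η ψ k x t]
  rw [integral_finset_sum]
  · refine Finset.sum_eq_zero fun j hj => ?_
    rw [integral_finset_sum]
    · refine Finset.sum_eq_zero fun r _ => ?_
      rw [integral_smul, integral_const_mul]
      have hmom := hψ (fun i => (Finset.univ.filter (fun m => r m = i)).card) ?hle
      case hle =>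
        have hcard : ∑ i : Fin n, (Finset.univ.filter (fun m => r m = i)).card
            = (Finset.univ : Finset (Fin j)).card :=
          (Finset.card_eq_sum_card_fiberwise (fun m _ => Finset.mem_univ (r m))).symm
        rw [hcard, Finset.card_univ, Fintype.card_fin]
        exact Nat.lt_succ_iff.mp (Finset.mem_range.mp hj)
      rw [hmom]
      simp
    · intro r _
      exact (((int_mono ψ _).const_mul _).fun_smul _)
  · intro j _
    apply integrable_finset_sum
    intro r _
    exact (((int_mono ψ _).const_mul _).fun_smul _)


lemma cnv_eq (η ψ : Eu n → ℂ) {t : ℝ} (ht : 0 < t) (x : Eu n) :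
    cnv n η (dil n ψ t) x = ∫ y, η (x - t • y) * ψ y := by
  have hF : ∀ y : Eu n, (fun y => η (x - y) * dil n ψ t y) (t • y)
      = ((t^n:ℝ):ℂ)⁻¹ • (η (x - t • y) * ψ y) := by
    intro y
    simp only [dil, smul_smul, inv_mul_cancel₀ ht.ne', one_smul, smul_eq_mul]
    ring
  have h := MeasureTheory.Measure.integral_comp_smul (volume : Measure (Eu n))
      (fun y => η (x - y) * dil n ψ t y) t
  simp only [hF, finrank_euclideanSpace_fin] at h
  rw [integral_smul] at h
  have habs : |(t ^ n)⁻¹| = (t^n)⁻¹ := abs_of_pos (by positivity)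
  rw [habs] at h
  have hcnv : cnv n η (dil n ψ t) x = ∫ y, η (x - y) * dil n ψ t y := rfl
  have h2 := congrArg (fun z : ℂ => ((t^n : ℝ)) • z) h
  simp only [smul_smul, mul_inv_cancel₀ (by positivity : (t:ℝ)^n ≠ 0), one_smul] at h2
  rw [hcnv, ← h2, Complex.real_smul, smul_eq_mul, ← mul_assoc,
    mul_inv_cancel₀ (Complex.ofReal_ne_zero.mpr (by positivity : (t:ℝ)^n ≠ 0)), one_mul]

end lem


/-- Euclidean case of Lemma 3.2(2). -/
theorem stmt_2 (n : ℕ) (η ψ : 𝓢(Eu n, ℂ)) (k : ℕ) (hψ : momZero n k ⇑ψ) :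
    ∀ M : ℝ, 0 ≤ M → ∃ C : ℝ, ∀ t : ℝ, 0 < t → t ≤ 1 → ∀ x : Eu n,
      ‖cnv n ⇑η (dil n ⇑ψ t) x‖ ≤
        C * t ^ (k + 1 : ℝ) * (1 + ‖x‖) ^ (-M) := by
  intro M hM
  classical
  set m : ℕ := ⌈M⌉₊ with hm
  have hMm : M ≤ (m:ℝ) := Nat.le_ceil M
  have hη : ContDiff ℝ (⊤:ℕ∞) (⇑η) := η.smooth ⊤
  set D : ℝ := 2^m * (Finset.Iic (m, k+1)).sup
      (fun p : ℕ × ℕ => SchwartzMap.seminorm ℝ p.1 p.2) η with hD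
  have hDer : ∀ z : Eu n, (1+‖z‖)^m * ‖iteratedFDeriv ℝ (k+1) η z‖ ≤ D :=
    fun z => one_add_le_sup_seminorm_apply (𝕜 := ℝ) (m := (m, k+1)) le_rfl le_rfl η z
  have hD0 : (0:ℝ) ≤ D := le_trans (by positivity) (hDer 0)
  set S : ℝ := ∫ y : Eu n, (1+‖y‖)^(m+(k+1)) * ‖ψ y‖ with hS
  have hSint := int_one_add ψ (m+(k+1))
  refine ⟨D * 2^m / (k.factorial) * S, ?_⟩
  intro t ht ht1 x
  have hxpos : (0:ℝ) < 1 + ‖x‖ := by positivity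
  set T : Eu n → ℂ := fun y => ∑ j ∈ Finset.range (k+1), ((j.factorial:ℝ)⁻¹) •
      (iteratedFDeriv ℝ j η x (fun _ => -(t • y))) with hT
  -- pointwise bound
  have claim : ∀ y : Eu n, ‖(⇑η) (x - t • y) - T y‖ ≤
      (D * 2^m / k.factorial) * t^(k+1) * (1+‖x‖)^(-M) * (1+‖y‖)^(m+(k+1)) := by
    intro y
    set w : Eu n := -(t • y) with hw
    have hxw : x - t • y = x + w := by rw [hw, sub_eq_add_neg]
    have hwn : ‖w‖ = t * ‖y‖ := by
      rw [hw, norm_neg, norm_smul, Real.norm_eq_abs, abs_of_pos ht]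
    have hTy : T y = ∑ j ∈ Finset.range (k+1), ((j.factorial:ℝ)⁻¹) •
        (iteratedFDeriv ℝ j η x (fun _ => w)) := rfl
    have hkfac : (0:ℝ) < k.factorial := by positivity
    rcases le_or_gt (t * ‖y‖) (‖x‖/2) with hcase | hcase
    · -- near region: use decay of derivative of η
      have hc : ∀ s ∈ Set.Icc (0:ℝ) 1,
          ‖iteratedFDeriv ℝ (k+1) (⇑η) (x + s • w)‖ ≤ D * 2^m * (1+‖x‖)^(-M) := by
        intro s hs
        set z : Eu n := x + s • w with hz
        have hsw : ‖s • w‖ ≤ ‖x‖/2 := by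
          rw [norm_smul, Real.norm_eq_abs, abs_of_nonneg hs.1, hwn]
          calc s * (t * ‖y‖) ≤ 1 * (t * ‖y‖) := by
                apply mul_le_mul_of_nonneg_right hs.2 (by positivity)
            _ ≤ ‖x‖/2 := by rw [one_mul]; exact hcase
        have hzx : ‖x‖/2 ≤ ‖z‖ := by
          have h1 : ‖x‖ - ‖s • w‖ ≤ ‖z‖ := by
            simpa [hz, sub_neg_eq_add] using norm_sub_norm_le x (-(s • w))
          linarith
        have hA : (1+‖x‖)^(M:ℝ) ≤ 2^m * (1+‖z‖)^m := by
          calc (1+‖x‖)^(M:ℝ) ≤ (2*(1+‖z‖))^(M:ℝ) := by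
                apply Real.rpow_le_rpow hxpos.le (by linarith [norm_nonneg x]) hM
            _ ≤ (2*(1+‖z‖))^((m:ℕ):ℝ) := by
                apply Real.rpow_le_rpow_of_exponent_le (by linarith [norm_nonneg z]) hMm
            _ = 2^m * (1+‖z‖)^m := by rw [Real.rpow_natCast, mul_pow]
        have hFz : ‖iteratedFDeriv ℝ (k+1) (⇑η) z‖ * (1+‖x‖)^(M:ℝ) ≤ D * 2^m := by
          calc ‖iteratedFDeriv ℝ (k+1) (⇑η) z‖ * (1+‖x‖)^(M:ℝ)
              ≤ ‖iteratedFDeriv ℝ (k+1) (⇑η) z‖ * (2^m * (1+‖z‖)^m) := by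
                exact mul_le_mul_of_nonneg_left hA (norm_nonneg _)
            _ = 2^m * ((1+‖z‖)^m * ‖iteratedFDeriv ℝ (k+1) (⇑η) z‖) := by ring
            _ ≤ 2^m * D := mul_le_mul_of_nonneg_left (hDer z) (by positivity)
            _ = D * 2^m := mul_comm _ _
        have hxMpos : (0:ℝ) < (1+‖x‖)^(M:ℝ) := Real.rpow_pos_of_pos hxpos _
        rw [Real.rpow_neg hxpos.le, ← div_eq_mul_inv, le_div_iff₀ hxMpos]
        exact hFz
      have htay := taylor_bound (⇑η) hη x w k _ hc
      rw [hxw, hTy]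
      calc ‖(⇑η) (x + w) - ∑ j ∈ Finset.range (k+1), ((j.factorial:ℝ)⁻¹) •
            (iteratedFDeriv ℝ j (⇑η) x (fun _ => w))‖
          ≤ D * 2^m * (1+‖x‖)^(-M) * ‖w‖^(k+1) / k.factorial := htay
        _ ≤ D * 2^m * (1+‖x‖)^(-M) * (t^(k+1) * (1+‖y‖)^(m+(k+1))) / k.factorial := by
            have hw2 : ‖w‖^(k+1) ≤ t^(k+1) * (1+‖y‖)^(m+(k+1)) := by
              rw [hwn, mul_pow]
              apply mul_le_mul_of_nonneg_left _ (by positivity)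
              calc ‖y‖^(k+1) ≤ (1+‖y‖)^(k+1) := by
                    apply pow_le_pow_left₀ (norm_nonneg y) (by linarith [norm_nonneg y])
                _ ≤ (1+‖y‖)^(m+(k+1)) := by
                    apply pow_le_pow_right₀ (by linarith [norm_nonneg y]) (by omega)
            have h0 : (0:ℝ) ≤ D * 2^m * (1+‖x‖)^(-M) := by positivity
            apply div_le_div_of_nonneg_right (mul_le_mul_of_nonneg_left hw2 h0) hkfac.le
        _ = (D * 2^m / k.factorial) * t^(k+1) * (1+‖x‖)^(-M) * (1+‖y‖)^(m+(k+1)) := by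
            ring
    · -- far region: use decay of ψ (encoded by (1+‖y‖) powers)
      have hc : ∀ s ∈ Set.Icc (0:ℝ) 1,
          ‖iteratedFDeriv ℝ (k+1) (⇑η) (x + s • w)‖ ≤ D := by
        intro s _
        set z : Eu n := x + s • w
        have h1 : (1:ℝ) ≤ (1+‖z‖)^m := one_le_pow₀ (by linarith [norm_nonneg z])
        calc ‖iteratedFDeriv ℝ (k+1) (⇑η) z‖
            = 1 * ‖iteratedFDeriv ℝ (k+1) (⇑η) z‖ := (one_mul _).symm
          _ ≤ (1+‖z‖)^m * ‖iteratedFDeriv ℝ (k+1) (⇑η) z‖ := by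
              exact mul_le_mul_of_nonneg_right h1 (norm_nonneg _)
          _ ≤ D := hDer z
      have htay := taylor_bound (⇑η) hη x w k _ hc
      have hone : (1:ℝ) ≤ 2^m * (1+‖y‖)^m * (1+‖x‖)^(-M) := by
        have hxy : 1+‖x‖ ≤ 2*(1+‖y‖) := by
          have hyy : t * ‖y‖ ≤ ‖y‖ := by
            calc t * ‖y‖ ≤ 1 * ‖y‖ := mul_le_mul_of_nonneg_right ht1 (norm_nonneg y)
              _ = ‖y‖ := one_mul _
          linarith
        have hA : (1+‖x‖)^(M:ℝ) ≤ 2^m * (1+‖y‖)^m := by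
          calc (1+‖x‖)^(M:ℝ) ≤ (2*(1+‖y‖))^(M:ℝ) :=
                Real.rpow_le_rpow hxpos.le hxy hM
            _ ≤ (2*(1+‖y‖))^((m:ℕ):ℝ) := by
                apply Real.rpow_le_rpow_of_exponent_le (by linarith [norm_nonneg y]) hMm
            _ = 2^m * (1+‖y‖)^m := by rw [Real.rpow_natCast, mul_pow]
        have hxMpos : (0:ℝ) < (1+‖x‖)^(M:ℝ) := Real.rpow_pos_of_pos hxpos _
        rw [Real.rpow_neg hxpos.le, ← div_eq_mul_inv, le_div_iff₀ hxMpos, one_mul]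
        exact hA
      rw [hxw, hTy]
      calc ‖(⇑η) (x + w) - ∑ j ∈ Finset.range (k+1), ((j.factorial:ℝ)⁻¹) •
            (iteratedFDeriv ℝ j (⇑η) x (fun _ => w))‖
          ≤ D * ‖w‖^(k+1) / k.factorial := htay
        _ = D * ‖w‖^(k+1) / k.factorial * 1 := (mul_one _).symm
        _ ≤ D * ‖w‖^(k+1) / k.factorial * (2^m * (1+‖y‖)^m * (1+‖x‖)^(-M)) := by
            apply mul_le_mul_of_nonneg_left hone (by positivity)
        _ ≤ (D * 2^m / k.factorial) * t^(k+1) * (1+‖x‖)^(-M) * (1+‖y‖)^(m+(k+1)) := by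
            rw [hwn, mul_pow]
            have hyb : ‖y‖^(k+1) * (1+‖y‖)^m ≤ (1+‖y‖)^(m+(k+1)) := by
              calc ‖y‖^(k+1) * (1+‖y‖)^m ≤ (1+‖y‖)^(k+1) * (1+‖y‖)^m := by
                    apply mul_le_mul_of_nonneg_right _ (by positivity)
                    exact pow_le_pow_left₀ (norm_nonneg y) (by linarith [norm_nonneg y]) _
                _ = (1+‖y‖)^(m+(k+1)) := by rw [← pow_add]; ring_nf
            have hfin : D * (t^(k+1) * ‖y‖^(k+1)) / k.factorial *
                  (2^m * (1+‖y‖)^m * (1+‖x‖)^(-M))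
                = (D * 2^m / k.factorial) * t^(k+1) * (1+‖x‖)^(-M) *
                    (‖y‖^(k+1) * (1+‖y‖)^m) := by ring
            rw [hfin]
            apply mul_le_mul_of_nonneg_left hyb (by positivity)
  -- assemble
  have hGint : Integrable (fun y : Eu n => (⇑η) (x - t • y) * ψ y) := by
    apply Integrable.bdd_mul (ψ.integrable (μ := volume))
    · exact (hη.continuous.comp
        (continuous_const.sub (continuous_id.const_smul t))).aestronglyMeasurable
    · exact Filter.Eventually.of_forall (fun y => SchwartzMap.norm_le_seminorm ℝ η _)
  have hTint : Integrable (fun y : Eu n => T y * ψ y) := int_T (⇑η) ψ k x t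
  have h0 : ∫ y : Eu n, T y * ψ y = 0 := integral_T_zero (⇑η) ψ k hψ x t
  have hrw : cnv n (⇑η) (dil n (⇑ψ) t) x = ∫ y, ((⇑η) (x - t • y) - T y) * ψ y := by
    rw [cnv_eq (⇑η) (⇑ψ) ht x]
    have : ∫ y : Eu n, ((⇑η) (x - t • y) - T y) * ψ y
        = (∫ y : Eu n, (⇑η) (x - t • y) * ψ y) - ∫ y : Eu n, T y * ψ y := by
      rw [← integral_sub hGint hTint]
      congr 1
      funext y
      ring
    rw [this, h0, sub_zero]
  have hnorm : ‖cnv n (⇑η) (dil n (⇑ψ) t) x‖ ≤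
      (D * 2^m / k.factorial) * t^(k+1) * (1+‖x‖)^(-M) * S := by
    rw [hrw]
    have hle : ∀ y : Eu n, ‖((⇑η) (x - t • y) - T y) * ψ y‖ ≤
        (D * 2^m / k.factorial) * t^(k+1) * (1+‖x‖)^(-M) *
          ((1+‖y‖)^(m+(k+1)) * ‖ψ y‖) := by
      intro y
      rw [norm_mul, ← mul_assoc]
      apply mul_le_mul_of_nonneg_right (claim y) (norm_nonneg _)
    calc ‖∫ y : Eu n, ((⇑η) (x - t • y) - T y) * ψ y‖
        ≤ ∫ y : Eu n, (D * 2^m / k.factorial) * t^(k+1) * (1+‖x‖)^(-M) *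
            ((1+‖y‖)^(m+(k+1)) * ‖ψ y‖) :=
          norm_integral_le_of_norm_le (hSint.const_mul _) (Filter.Eventually.of_forall hle)
      _ = (D * 2^m / k.factorial) * t^(k+1) * (1+‖x‖)^(-M) * S := by
          rw [integral_const_mul]
  have hpow : t ^ ((k:ℝ) + 1) = t^(k+1) := by
    rw [show ((k:ℝ) + 1) = ((k+1 : ℕ):ℝ) by push_cast; ring, Real.rpow_natCast]
  calc ‖cnv n (⇑η) (dil n (⇑ψ) t) x‖
      ≤ (D * 2^m / k.factorial) * t^(k+1) * (1+‖x‖)^(-M) * S := hnorm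
    _ = D * 2^m / k.factorial * S * t ^ ((k:ℝ) + 1) * (1+‖x‖)^(-M) := by
        rw [hpow]; ring

end
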